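/- arXiv:2504.14863 — 5 statements merged into one kernel-verified Lean document; each statement's English description precedes it below -/
import Mathlib

section
/- Let G be a minimal nonperfectly divisible fork-free graph, v ∈ V(G), and C = v_1v_2…v_nv_1 an odd hole contained in G[M(v)] (n ≥ 5 odd, indices modulo n). Let u_i ∈ U_i(C) and u_j ∈ U_j(C) with 1 ≤ i < j ≤ n. If u_i is adjacent to u_j, then N(u_i) ∩ M(C) = N(u_j) ∩ M(C). -/
open SimpleGraph

/-- `G` contains an induced copy of `H`. -/
def HasInducedCopy {V W : Type*} (G : SimpleGraph V) (H : SimpleGraph W) : Prop :=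
  ∃ f : W ↪ V, ∀ a b : W, G.Adj (f a) (f b) ↔ H.Adj a b

/-- The fork: the claw `K_{1,3}` with one edge subdivided once. -/
def fork : SimpleGraph (Fin 5) :=
  SimpleGraph.fromEdgeSet {s(0, 1), s(0, 2), s(0, 3), s(3, 4)}

/-- The claw `K_{1,3}`. -/
def claw : SimpleGraph (Fin 4) :=
  SimpleGraph.fromEdgeSet {s(0, 1), s(0, 2), s(0, 3)}

/-- The path on 7 vertices. -/
def P7 : SimpleGraph (Fin 7) := SimpleGraph.pathGraph 7

/-- The disjoint union of a path on 6 vertices and a single vertex. -/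
def P6K1 : SimpleGraph (Fin 7) :=
  SimpleGraph.fromEdgeSet {s(0, 1), s(1, 2), s(2, 3), s(3, 4), s(4, 5)}

/-- A graph is perfect if every induced subgraph has chromatic number
equal to clique number. -/
def IsPerfect {V : Type*} (G : SimpleGraph V) : Prop :=
  ∀ s : Set V, (G.induce s).chromaticNumber = ((G.induce s).cliqueNum : ℕ∞)

/-- A graph is perfectly divisible if the vertex set of every (nonempty) induced
subgraph `H` can be partitioned into `A` and `B` with `H[A]` perfect and
`ω(H[B]) < ω(H)`. -/
def PerfectlyDivisible {V : Type*} (G : SimpleGraph V) : Prop :=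
  ∀ s : Set V, s.Nonempty → ∃ A B : Set V, A ∪ B = s ∧ A ∩ B = ∅ ∧
    IsPerfect (G.induce A) ∧ (G.induce B).cliqueNum < (G.induce s).cliqueNum

/-- A graph is minimal nonperfectly divisible if it is not perfectly divisible but
every proper induced subgraph is perfectly divisible. -/
def MinimalNPD {V : Type*} (G : SimpleGraph V) : Prop :=
  ¬ PerfectlyDivisible G ∧ ∀ s : Set V, s ≠ Set.univ → PerfectlyDivisible (G.induce s)

/-- The open neighborhood of a set `S`: all vertices outside `S` with a neighbor in `S`. -/
def NSet {V : Type*} (G : SimpleGraph V) (S : Set V) : Set V :=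
  {v | v ∉ S ∧ ∃ x ∈ S, G.Adj x v}

/-- `M(S)`: the vertices outside `S ∪ N(S)`. -/
def MSet {V : Type*} (G : SimpleGraph V) (S : Set V) : Set V :=
  {v | v ∉ S ∧ v ∉ NSet G S}

/-- `M(v)`: the set of vertices distinct from `v` and nonadjacent to `v`. -/
def Mv {V : Type*} (G : SimpleGraph V) (v : V) : Set V :=
  {u | u ≠ v ∧ ¬ G.Adj v u}

/-- `f : ZMod n → V` describes a hole (an induced cycle of length at least 4) of `G`. -/
def IsHole {V : Type*} (G : SimpleGraph V) (n : ℕ) (f : ZMod n → V) : Prop :=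
  4 ≤ n ∧ Function.Injective f ∧
    ∀ i j : ZMod n, G.Adj (f i) (f j) ↔ (j = i + 1 ∨ i = j + 1)

/-- `U(C)`: the balloon centers of the hole `C` given by `f`. -/
def USet {V : Type*} (G : SimpleGraph V) (n : ℕ) (f : ZMod n → V) : Set V :=
  {u | u ∈ NSet G (MSet G (Set.range f)) ∧
    ∃ i : ZMod n, G.neighborSet u ∩ Set.range f = {f i, f (i + 1)}}

/-- `U_i(C)`: the balloon centers of `C` attached at `v_i v_{i+1}`. -/
def UiSet {V : Type*} (G : SimpleGraph V) (n : ℕ) (f : ZMod n → V) (i : ZMod n) : Set V :=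
  {u | u ∈ NSet G (MSet G (Set.range f)) ∧
    G.neighborSet u ∩ Set.range f = {f i, f (i + 1)}}

/-- `U'(C)`: the parachute centers of `C`. -/
def U'Set {V : Type*} (G : SimpleGraph V) (n : ℕ) (f : ZMod n → V) : Set V :=
  {u | u ∈ NSet G (MSet G (Set.range f)) ∧ ∀ i : ZMod n, G.Adj u (f i)}

/-- `Z(C)`: vertices of `N(V(C)) \ N(M(C))` not complete to `V(C)`. -/
def ZSet {V : Type*} (G : SimpleGraph V) (n : ℕ) (f : ZMod n → V) : Set V :=
  {z | z ∈ NSet G (Set.range f) ∧ z ∉ NSet G (MSet G (Set.range f)) ∧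
    ¬ ∀ i : ZMod n, G.Adj z (f i)}

/-- `Z'(C) = N(V(C)) \ (N(M(C)) ∪ Z(C))`. -/
def Z'Set {V : Type*} (G : SimpleGraph V) (n : ℕ) (f : ZMod n → V) : Set V :=
  NSet G (Set.range f) \ (NSet G (MSet G (Set.range f)) ∪ ZSet G n f)

/-- `Y(C) = N_{M(C)}(U(C))`. -/
def YSet {V : Type*} (G : SimpleGraph V) (n : ℕ) (f : ZMod n → V) : Set V :=
  {y | y ∈ MSet G (Set.range f) ∧ ∃ u ∈ USet G n f, G.Adj u y}

/-- `x` and `y` lie in a common connected component of `G[S]`. -/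
def SameComp {V : Type*} (G : SimpleGraph V) (S : Set V) (x y : V) : Prop :=
  ∃ (hx : x ∈ S) (hy : y ∈ S), (G.induce S).Reachable ⟨x, hx⟩ ⟨y, hy⟩

/-- `Y'(C)`: the union of the components of `G[M(C)]` meeting `Y(C)`. -/
def Y'Set {V : Type*} (G : SimpleGraph V) (n : ℕ) (f : ZMod n → V) : Set V :=
  {x | ∃ y ∈ YSet G n f, SameComp G (MSet G (Set.range f)) x y}

/-!
Suppose `y ∈ M(C)` is adjacent to `u_i` but not to `u_j`. Since the edges `v_i v_{i+1}` and
`v_j v_{j+1}` of the hole are distinct, one can pick an end `a` of the first and an end `b` of the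
second such that `a` is not on the second edge, `b` is not on the first, and `v_a v_b` is not an
edge of the hole. Then `u_i` with the leaves `y`, `v_a`, `u_j` and the
pendant edge `u_j v_b` is an induced fork.
-/

theorem hasInducedCopy_fork_of_adj {V : Type*} {G : SimpleGraph V} {x₀ x₁ x₂ x₃ x₄ : V}
    (h₁₂ : x₁ ≠ x₂) (e₀₁ : G.Adj x₀ x₁) (e₀₂ : G.Adj x₀ x₂) (e₀₃ : G.Adj x₀ x₃)
    (e₃₄ : G.Adj x₃ x₄) (n₀₄ : ¬G.Adj x₀ x₄) (n₁₂ : ¬G.Adj x₁ x₂) (n₁₃ : ¬G.Adj x₁ x₃)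
    (n₁₄ : ¬G.Adj x₁ x₄) (n₂₃ : ¬G.Adj x₂ x₃) (n₂₄ : ¬G.Adj x₂ x₄) :
    HasInducedCopy G fork := by
  have h₀₄ : x₀ ≠ x₄ := by rintro rfl; exact n₁₄ e₀₁.symm
  have h₁₃ : x₁ ≠ x₃ := by rintro rfl; exact n₁₄ e₃₄
  have h₁₄ : x₁ ≠ x₄ := by rintro rfl; exact n₀₄ e₀₁
  have h₂₃ : x₂ ≠ x₃ := by rintro rfl; exact n₂₄ e₃₄
  have h₂₄ : x₂ ≠ x₄ := by rintro rfl; exact n₀₄ e₀₂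
  have h₀₁ := e₀₁.ne; have h₀₂ := e₀₂.ne; have h₀₃ := e₀₃.ne; have h₃₄ := e₃₄.ne
  have hadj : ∀ a b, G.Adj (![x₀, x₁, x₂, x₃, x₄] a) (![x₀, x₁, x₂, x₃, x₄] b) ↔ fork.Adj a b := by
    intro a b
    fin_cases a <;> fin_cases b <;> simp [fork, G.adj_comm, *]
  refine ⟨⟨![x₀, x₁, x₂, x₃, x₄], fun a b hab => ?_⟩, hadj⟩
  fin_cases a <;> fin_cases b <;> simp_all [eq_comm]

theorem adj_iff_of_neighborSet_inter_range {V ι : Type*} {G : SimpleGraph V} {f : ι → V}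
    (hf : Function.Injective f) {u : V} {a b : ι}
    (hu : G.neighborSet u ∩ Set.range f = {f a, f b}) (k : ι) :
    G.Adj u (f k) ↔ k = a ∨ k = b := by
  simpa [hf.eq_iff] using Set.ext_iff.mp hu (f k)

theorem not_adj_of_mem_MSet {V : Type*} {G : SimpleGraph V} {S : Set V} {x y : V}
    (hx : x ∈ S) (hy : y ∈ MSet G S) : ¬G.Adj x y :=
  fun h => hy.2 ⟨hy.1, x, hx, h⟩

theorem ZMod.natCast_ne_zero_of_lt {n k : ℕ} (hk : 0 < k) (hkn : k < n) : (k : ZMod n) ≠ 0 :=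
  (ZMod.natCast_eq_zero_iff k n).not.mpr (Nat.not_dvd_of_pos_of_lt hk hkn)

theorem exists_private_nonadjacent_ends {n : ℕ} (hn : 4 ≤ n) {i j : ZMod n} (hij : i ≠ j) :
    ∃ a b : ZMod n, (a = i ∨ a = i + 1) ∧ (b = j ∨ b = j + 1) ∧ ¬(a = j ∨ a = j + 1) ∧
      ¬(b = i ∨ b = i + 1) ∧ ¬(b = a + 1 ∨ a = b + 1) := by
  have h₁ : ((1 : ℕ) : ZMod n) ≠ 0 := ZMod.natCast_ne_zero_of_lt (by omega) (by omega)
  have h₂ : ((2 : ℕ) : ZMod n) ≠ 0 := ZMod.natCast_ne_zero_of_lt (by omega) (by omega)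
  have h₃ : ((3 : ℕ) : ZMod n) ≠ 0 := ZMod.natCast_ne_zero_of_lt (by omega) (by omega)
  push_cast at h₁ h₂ h₃
  by_cases hji : j = i + 1
  · exact ⟨i, i + 2, by grind⟩
  by_cases hij' : i = j + 1
  · exact ⟨j + 2, j, by grind⟩
  exact ⟨i, j, by grind⟩

theorem adj_of_adj_of_neighborSet_inter_range {V : Type*} {G : SimpleGraph V}
    (hfork : ¬HasInducedCopy G fork) {n : ℕ} {f : ZMod n → V} (hC : IsHole G n f)
    {i j : ZMod n} (hij : i ≠ j) {ui uj : V}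
    (hui : G.neighborSet ui ∩ Set.range f = {f i, f (i + 1)})
    (huj : G.neighborSet uj ∩ Set.range f = {f j, f (j + 1)}) (hadj : G.Adj ui uj)
    {y : V} (hy : y ∈ MSet G (Set.range f)) (hyui : G.Adj ui y) : G.Adj uj y := by
  obtain ⟨hn, hf, hcycle⟩ := hC
  obtain ⟨a, b, hai, hbj, haj, hbi, hab⟩ := exists_private_nonadjacent_ends hn hij
  have hfa : ¬G.Adj (f a) y := not_adj_of_mem_MSet (Set.mem_range_self a) hy
  have hfb : ¬G.Adj (f b) y := not_adj_of_mem_MSet (Set.mem_range_self b) hy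
  have hya : y ≠ f a := fun h => hy.1 ⟨a, h.symm⟩
  by_contra hyuj
  exact hfork <| hasInducedCopy_fork_of_adj hya hyui
    ((adj_iff_of_neighborSet_inter_range hf hui a).mpr hai) hadj
    ((adj_iff_of_neighborSet_inter_range hf huj b).mpr hbj)
    (mt (adj_iff_of_neighborSet_inter_range hf hui b).mp hbi) (mt G.adj_symm hfa)
    (mt G.adj_symm hyuj) (mt G.adj_symm hfb)
    (mt (adj_iff_of_neighborSet_inter_range hf huj a).mp haj ∘ G.adj_symm)
    (mt (hcycle a b).mp hab)

theorem stmt11_general {V : Type*} (G : SimpleGraph V)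
    (hfork : ¬ HasInducedCopy G fork)
    (n : ℕ) (f : ZMod n → V) (hC : IsHole G n f)
    (i j : ZMod n) (hij : i ≠ j) (ui uj : V)
    (hui : ui ∈ UiSet G n f i) (huj : uj ∈ UiSet G n f j) (hadj : G.Adj ui uj) :
    G.neighborSet ui ∩ MSet G (Set.range f) =
      G.neighborSet uj ∩ MSet G (Set.range f) :=
  Set.ext fun _ => and_congr_left fun hy =>
    ⟨adj_of_adj_of_neighborSet_inter_range hfork hC hij hui.2 huj.2 hadj hy,
      adj_of_adj_of_neighborSet_inter_range hfork hC hij.symm huj.2 hui.2 hadj.symm hy⟩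

theorem stmt11 {V : Type*} [Fintype V] (G : SimpleGraph V)
    (hfork : ¬ HasInducedCopy G fork) (hmin : MinimalNPD G)
    (v : V) (n : ℕ) (f : ZMod n → V) (hC : IsHole G n f) (hodd : Odd n)
    (hn : 5 ≤ n) (hMv : Set.range f ⊆ Mv G v)
    (i j : ZMod n) (hij : i ≠ j) (ui uj : V)
    (hui : ui ∈ UiSet G n f i) (huj : uj ∈ UiSet G n f j) (hadj : G.Adj ui uj) :
    G.neighborSet ui ∩ MSet G (Set.range f) =
      G.neighborSet uj ∩ MSet G (Set.range f) :=
  stmt11_general G hfork n f hC i j hij ui uj hui huj hadj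
end

section
/- Let G be a minimal nonperfectly divisible fork-free graph, v ∈ V(G), and C = v_1v_2…v_nv_1 an odd hole contained in G[M(v)] (n ≥ 5 odd, indices modulo n). Then for every z ∈ Z(C) that has a neighbor in U(C), there exist indices i, j ∈ {1, 2, …, n} such that N(z) ∩ U(C) ⊆ U_i(C) ∪ U_j(C). -/
open SimpleGraph

theorem ZMod.one_two_three_four_ne_zero {n : ℕ} (hn : 5 ≤ n) :
    (1 : ZMod n) ≠ 0 ∧ (2 : ZMod n) ≠ 0 ∧ (3 : ZMod n) ≠ 0 ∧ (4 : ZMod n) ≠ 0 :=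
  ⟨mod_cast natCast_ne_zero_of_lt (k := 1) one_pos (by omega),
    mod_cast natCast_ne_zero_of_lt (k := 2) two_pos (by omega),
    mod_cast natCast_ne_zero_of_lt (k := 3) three_pos (by omega),
    mod_cast natCast_ne_zero_of_lt (k := 4) four_pos (by omega)⟩

theorem ZMod.eq_or_eq_or_eq_of_pairwise_sdiff {n : ℕ} (hn : 5 ≤ n) (N : Set (ZMod n))
    (i j k : ZMod n)
    (hN : ∀ p ∈ ({i, j, k} : Set (ZMod n)), p ∈ N ∧ p + 1 ∈ N ∧
      (N \ {p, p + 1}).Pairwise fun a b => b = a + 1 ∨ a = b + 1) :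
    i = j ∨ i = k ∨ j = k := by
  obtain ⟨h1, h2, h3, h4⟩ := ZMod.one_two_three_four_ne_zero hn
  have near : ∀ p ∈ ({i, j, k} : Set (ZMod n)), ∀ a ∈ N, ∀ b ∈ N,
      a = p ∨ a = p + 1 ∨ b = p ∨ b = p + 1 ∨ a = b ∨ b = a + 1 ∨ a = b + 1 := by
    intro p hp a ha b hb
    by_contra! h
    obtain ⟨hap, hap', hbp, hbp', hab, hba, hab'⟩ := h
    exact ((hN p hp).2.2 ⟨ha, by simp [hap, hap']⟩ ⟨hb, by simp [hbp, hbp']⟩ hab).elim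
      hba hab'
  obtain ⟨hi, hi'⟩ : i ∈ N ∧ i + 1 ∈ N := ⟨(hN i (by simp)).1, (hN i (by simp)).2.1⟩
  obtain ⟨hj, hj'⟩ : j ∈ N ∧ j + 1 ∈ N := ⟨(hN j (by simp)).1, (hN j (by simp)).2.1⟩
  obtain ⟨hk, hk'⟩ : k ∈ N ∧ k + 1 ∈ N := ⟨(hN k (by simp)).1, (hN k (by simp)).2.1⟩
  have := near i (by simp) j hj k hk
  have := near i (by simp) (j + 1) hj' k hk
  have := near i (by simp) j hj (k + 1) hk'
  have := near j (by simp) i hi k hk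
  have := near j (by simp) (i + 1) hi' k hk
  have := near j (by simp) i hi (k + 1) hk'
  have := near k (by simp) i hi j hj
  have := near k (by simp) (i + 1) hi' j hj
  have := near k (by simp) i hi (j + 1) hj'
  clear near hN
  -- Either one of `i, j, k` is not consecutive to the other two, and then `near` at it
  -- forces those two to coincide, or they are `p, p + 1, p + 2` and `near` at `p + 1`
  -- fails for `p, p + 3`.
  grind (splits := 100)

theorem ZMod.exists_subset_pair_of_pairwise_sdiff {n : ℕ} (hn : 5 ≤ n) (N I : Set (ZMod n))
    (hI : ∀ p ∈ I, p ∈ N ∧ p + 1 ∈ N ∧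
      (N \ {p, p + 1}).Pairwise fun a b => b = a + 1 ∨ a = b + 1) :
    ∃ i j, I ⊆ {i, j} := by
  rcases I.eq_empty_or_nonempty with rfl | ⟨i, hi⟩
  · exact ⟨0, 0, Set.empty_subset _⟩
  by_cases h : ∃ j ∈ I, j ≠ i
  · obtain ⟨j, hj, hji⟩ := h
    refine ⟨i, j, fun k hk => ?_⟩
    have := ZMod.eq_or_eq_or_eq_of_pairwise_sdiff hn N i j k
      (by rintro p (rfl | rfl | rfl) <;> exact hI _ ‹_›)
    simp only [Set.mem_insert_iff, Set.mem_singleton_iff]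
    grind
  · push Not at h
    exact ⟨i, i, fun k hk => Or.inl (h k hk)⟩

theorem hasInducedCopy_fork {V : Type*} {G : SimpleGraph V} {a b c d e : V} (hab : G.Adj a b)
    (hac : G.Adj a c) (had : G.Adj a d) (hde : G.Adj d e) (hbc : ¬ G.Adj b c)
    (hbd : ¬ G.Adj b d) (hcd : ¬ G.Adj c d) (hae : ¬ G.Adj a e) (hbe : ¬ G.Adj b e)
    (hce : ¬ G.Adj c e) (hbc' : b ≠ c) :
    HasInducedCopy G fork := by
  have hbd' : b ≠ d := by rintro rfl; exact hbe hde
  have hcd' : c ≠ d := by rintro rfl; exact hce hde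
  have hae' : a ≠ e := by rintro rfl; exact hbe hab.symm
  have hbe' : b ≠ e := by rintro rfl; exact hae hab
  have hce' : c ≠ e := by rintro rfl; exact hae hac
  refine ⟨⟨![a, b, c, d, e], fun x y hxy => ?_⟩, fun x y => ?_⟩
  · fin_cases x <;> fin_cases y <;> simp_all [eq_comm, hab.ne, hac.ne, had.ne, hde.ne]
  · change G.Adj (![a, b, c, d, e] x) (![a, b, c, d, e] y) ↔ _
    fin_cases x <;> fin_cases y <;> simp_all [fork, adj_comm]

namespace IsHole

variable {V : Type*} {G : SimpleGraph V} {n : ℕ} {f : ZMod n → V}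

theorem adj_iff (hC : IsHole G n f) (a b : ZMod n) :
    G.Adj (f a) (f b) ↔ b = a + 1 ∨ a = b + 1 :=
  hC.2.2 a b

theorem injective (hC : IsHole G n f) : Function.Injective f :=
  hC.2.1

theorem adj_add_one (hC : IsHole G n f) (i : ZMod n) : G.Adj (f i) (f (i + 1)) :=
  (hC.adj_iff _ _).2 (Or.inl rfl)

theorem not_adj (hC : IsHole G n f) {a b : ZMod n} (hba : b ≠ a + 1) (hab : a ≠ b + 1) :
    ¬ G.Adj (f a) (f b) := fun h => ((hC.adj_iff a b).1 h).elim hba hab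

theorem reverse (hC : IsHole G n f) : IsHole G n fun c => f (-c) :=
  ⟨hC.1, hC.injective.comp neg_injective, fun a b => by rw [hC.adj_iff]; grind⟩

end IsHole

/-- Models `z ∈ Z(C)` adjacent to `u ∈ U_i(C)`, with a neighbour `y ∈ M(C)` of `u`. -/
structure IsBalloonPath {V : Type*} (G : SimpleGraph V) {n : ℕ} (f : ZMod n → V) (i : ZMod n)
    (z u y : V) : Prop where
  ne_hole : ∀ c, z ≠ f c
  not_adj_hole : ∀ c, ¬ G.Adj y (f c)
  ne : y ≠ z
  adj_zu : G.Adj z u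
  adj_uy : G.Adj u y
  not_adj_yz : ¬ G.Adj y z
  adj_hole_iff : ∀ c, G.Adj u (f c) ↔ c = i ∨ c = i + 1

theorem exists_isBalloonPath {V : Type*} {G : SimpleGraph V} {n : ℕ} {f : ZMod n → V}
    (hf : Function.Injective f) {i : ZMod n} {z u : V} (hz : z ∈ ZSet G n f)
    (hu : u ∈ UiSet G n f i) (hzu : G.Adj z u) : ∃ y, IsBalloonPath G f i z u y := by
  obtain ⟨⟨-, y, hyM, hyu⟩, hu⟩ := hu
  obtain ⟨hzC, hzM, -⟩ := hz
  refine ⟨y, ⟨fun c h => hzC.1 ⟨c, h.symm⟩, fun c h => hyM.2 ⟨hyM.1, f c, ⟨c, rfl⟩, h.symm⟩,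
    fun h => hyM.2 (h ▸ hzC), hzu, hyu.symm, fun h => hzM ⟨fun hz => hz.2 hzC, y, hyM, h⟩,
    fun c => ?_⟩⟩
  have : G.Adj u (f c) ↔ f c ∈ G.neighborSet u ∩ Set.range f := by simp
  rw [this, hu]
  simp [hf.eq_iff]

namespace IsBalloonPath

variable {V : Type*} {G : SimpleGraph V} {n : ℕ} {f : ZMod n → V} {i : ZMod n} {z u y : V}

theorem reverse (hp : IsBalloonPath G f i z u y) :
    IsBalloonPath G (fun c => f (-c)) (-(i + 1)) z u y where
  ne_hole c := hp.ne_hole (-c)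
  not_adj_hole c := hp.not_adj_hole (-c)
  ne := hp.ne
  adj_zu := hp.adj_zu
  adj_uy := hp.adj_uy
  not_adj_yz := hp.not_adj_yz
  adj_hole_iff c := by rw [hp.adj_hole_iff]; grind

theorem pairwise_adj_hole (hfork : ¬ HasInducedCopy G fork) (hC : IsHole G n f)
    (hp : IsBalloonPath G f i z u y) :
    ({c | G.Adj z (f c)} \ {i, i + 1}).Pairwise fun a b => b = a + 1 ∨ a = b + 1 := by
  rintro a ⟨ha, ha'⟩ b ⟨hb, hb'⟩ hab
  by_contra h
  push Not at h
  exact hfork (hasInducedCopy_fork ha hb hp.adj_zu hp.adj_uy (hC.not_adj h.1 h.2)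
    (fun h => ha' ((hp.adj_hole_iff a).1 h.symm)) (fun h => hb' ((hp.adj_hole_iff b).1 h.symm))
    (fun h => hp.not_adj_yz h.symm) (fun h => hp.not_adj_hole a h.symm)
    (fun h => hp.not_adj_hole b h.symm) (hC.injective.ne hab))

theorem adj_add_two_of_not_adj_add_one (hfork : ¬ HasInducedCopy G fork) (hC : IsHole G n f)
    (hp : IsBalloonPath G f i z u y) (h : ¬ G.Adj z (f (i + 1))) : G.Adj z (f (i + 2)) := by
  have hn : 4 ≤ n := hC.1
  have h1 : (1 : ZMod n) ≠ 0 := mod_cast ZMod.natCast_ne_zero_of_lt (k := 1) one_pos (by omega)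
  have h2 : (2 : ZMod n) ≠ 0 := mod_cast ZMod.natCast_ne_zero_of_lt (k := 2) two_pos (by omega)
  have hu2 : ¬ G.Adj u (f (i + 2)) := fun hu2 => by
    rcases (hp.adj_hole_iff _).1 hu2 with h' | h'
    exacts [h2 (by linear_combination h'), h1 (by linear_combination h')]
  by_contra h'
  exact hfork (hasInducedCopy_fork hp.adj_uy hp.adj_zu.symm ((hp.adj_hole_iff _).2 (Or.inr rfl))
    ((hC.adj_iff _ _).2 (Or.inl (by ring))) hp.not_adj_yz (hp.not_adj_hole _) h hu2
    (hp.not_adj_hole _) h' hp.ne)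

theorem eq_or_eq_or_eq_of_not_adj_add_one (hfork : ¬ HasInducedCopy G fork) (hC : IsHole G n f)
    (hp : IsBalloonPath G f i z u y) (h : ¬ G.Adj z (f (i + 1))) {c : ZMod n}
    (hc : G.Adj z (f c)) : c = i ∨ c = i + 1 ∨ c = i + 2 := by
  by_contra! h'
  exact hfork (hasInducedCopy_fork hp.adj_uy ((hp.adj_hole_iff _).2 (Or.inr rfl))
    hp.adj_zu.symm hc (hp.not_adj_hole _) hp.not_adj_yz (fun h' => h h'.symm)
    (fun h => ((hp.adj_hole_iff c).1 h).elim h'.1 h'.2.1) (hp.not_adj_hole c)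
    (hC.not_adj (by grind) (by grind))
    (fun h => hp.not_adj_hole _ (h ▸ hC.adj_add_one (i + 1))))

theorem adj_add_one (hfork : ¬ HasInducedCopy G fork) (hC : IsHole G n f) (hn : 5 ≤ n)
    (hp : IsBalloonPath G f i z u y) : G.Adj z (f (i + 1)) := by
  obtain ⟨h1, h2, h3, h4⟩ := ZMod.one_two_three_four_ne_zero hn
  by_contra h
  have hz3 : ¬ G.Adj z (f (i + 3)) := fun hz3 => by
    rcases hp.eq_or_eq_or_eq_of_not_adj_add_one hfork hC h hz3 with h' | h' | h'
    exacts [h3 (by linear_combination h'), h2 (by linear_combination h'),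
      h1 (by linear_combination h')]
  have hz4 : ¬ G.Adj z (f (i + 4)) := fun hz4 => by
    rcases hp.eq_or_eq_or_eq_of_not_adj_add_one hfork hC h hz4 with h' | h' | h'
    exacts [h4 (by linear_combination h'), h3 (by linear_combination h'),
      h2 (by linear_combination h')]
  -- The fork is centred at `v_{i+2}`, with leaves `z`, `v_{i+1}` and the path `v_{i+3} v_{i+4}`.
  exact hfork (hasInducedCopy_fork
    (hp.adj_add_two_of_not_adj_add_one hfork hC h).symm
    ((hC.adj_iff _ _).2 (Or.inr (by ring))) ((hC.adj_iff _ _).2 (Or.inl (by ring)))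
    ((hC.adj_iff _ _).2 (Or.inl (by ring))) h hz3
    (hC.not_adj (fun h => h1 (by linear_combination h)) (fun h => h3 (by linear_combination -h)))
    (hC.not_adj (fun h => h1 (by linear_combination h)) (fun h => h3 (by linear_combination -h)))
    hz4
    (hC.not_adj (fun h => h2 (by linear_combination h)) (fun h => h4 (by linear_combination -h)))
    (hp.ne_hole _))

theorem adj_self (hfork : ¬ HasInducedCopy G fork) (hC : IsHole G n f) (hn : 5 ≤ n)
    (hp : IsBalloonPath G f i z u y) : G.Adj z (f i) := by
  simpa using hp.reverse.adj_add_one hfork hC.reverse hn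

end IsBalloonPath

theorem stmt12_general {V : Type*} (G : SimpleGraph V)
    (hfork : ¬ HasInducedCopy G fork)
    (n : ℕ) (f : ZMod n → V) (hC : IsHole G n f)
    (hn : 5 ≤ n) :
    ∀ z ∈ ZSet G n f, (∃ u ∈ USet G n f, G.Adj z u) →
      ∃ i j : ZMod n, ∀ u ∈ USet G n f, G.Adj z u →
        u ∈ UiSet G n f i ∪ UiSet G n f j := by
  intro z hz _
  obtain ⟨i, j, hij⟩ := ZMod.exists_subset_pair_of_pairwise_sdiff hn {c | G.Adj z (f c)}
    {k | ∃ u ∈ UiSet G n f k, G.Adj z u} <| by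
      rintro k ⟨u, hu, hzu⟩
      obtain ⟨y, hp⟩ := exists_isBalloonPath hC.injective hz hu hzu
      exact ⟨hp.adj_self hfork hC hn, hp.adj_add_one hfork hC hn, hp.pairwise_adj_hole hfork hC⟩
  refine ⟨i, j, fun u ⟨hu, k, hk⟩ hzu => ?_⟩
  have hk : u ∈ UiSet G n f k := ⟨hu, hk⟩
  rcases hij ⟨u, hk, hzu⟩ with rfl | rfl
  exacts [Or.inl hk, Or.inr hk]

theorem stmt12 {V : Type*} [Fintype V] (G : SimpleGraph V)
    (hfork : ¬ HasInducedCopy G fork) (hmin : MinimalNPD G)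
    (v : V) (n : ℕ) (f : ZMod n → V) (hC : IsHole G n f) (hodd : Odd n)
    (hn : 5 ≤ n) (hMv : Set.range f ⊆ Mv G v) :
    ∀ z ∈ ZSet G n f, (∃ u ∈ USet G n f, G.Adj z u) →
      ∃ i j : ZMod n, ∀ u ∈ USet G n f, G.Adj z u →
        u ∈ UiSet G n f i ∪ UiSet G n f j :=
  stmt12_general G hfork n f hC hn
end

section
/- Let G be a minimal nonperfectly divisible fork-free graph, v ∈ V(G), and C = v_1v_2…v_nv_1 an odd hole contained in G[M(v)] (n ≥ 5 odd, indices modulo n). Let z ∈ Z(C) have a neighbor in U_i(C) for some i ∈ {1, …, n}. Then N(z) ∩ V(C) = {v_i, v_{i+1}}, or N(z) ∩ V(C) = {v_i, v_{i+1}, v_j, v_{j+1}} for some j ≠ i. -/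
open SimpleGraph

lemma fork_of {V : Type*} (G : SimpleGraph V) (a b c d e : V)
    (hab : G.Adj a b) (hac : G.Adj a c) (had : G.Adj a d) (hde : G.Adj d e)
    (hbc : ¬ G.Adj b c) (hbd : ¬ G.Adj b d) (hcd : ¬ G.Adj c d)
    (hae : ¬ G.Adj a e) (hbe : ¬ G.Adj b e) (hce : ¬ G.Adj c e)
    (nbc : b ≠ c) (nbd : b ≠ d) (ncd : c ≠ d)
    (nae : a ≠ e) (nbe : b ≠ e) (nce : c ≠ e) :
    HasInducedCopy G fork := by
  have nab := hab.ne; have nac := hac.ne; have nad := had.ne; have nde := hde.ne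
  have inj : Function.Injective ![a, b, c, d, e] := by
    intro p q h
    fin_cases p <;> fin_cases q <;> simp_all
  refine ⟨⟨![a, b, c, d, e], inj⟩, ?_⟩
  intro p q
  have hcb : ¬ G.Adj c b := fun h => hbc h.symm
  have hdb : ¬ G.Adj d b := fun h => hbd h.symm
  have hdc : ¬ G.Adj d c := fun h => hcd h.symm
  have hea : ¬ G.Adj e a := fun h => hae h.symm
  have heb : ¬ G.Adj e b := fun h => hbe h.symm
  have hec : ¬ G.Adj e c := fun h => hce h.symm
  have hba := hab.symm; have hca := hac.symm; have hda := had.symm; have hed := hde.symm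
  fin_cases p <;> fin_cases q <;>
    simp_all [fork, SimpleGraph.fromEdgeSet_adj, Sym2.eq_iff]

theorem stmt13 {V : Type*} [Fintype V] (G : SimpleGraph V)
    (hfork : ¬ HasInducedCopy G fork) (hmin : MinimalNPD G)
    (v : V) (n : ℕ) (f : ZMod n → V) (hC : IsHole G n f) (hodd : Odd n)
    (hn : 5 ≤ n) (hMv : Set.range f ⊆ Mv G v)
    (z : V) (hz : z ∈ ZSet G n f) (i : ZMod n)
    (hzu : ∃ u ∈ UiSet G n f i, G.Adj z u) :
    G.neighborSet z ∩ Set.range f = {f i, f (i + 1)} ∨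
      ∃ j : ZMod n, j ≠ i ∧
        G.neighborSet z ∩ Set.range f = {f i, f (i + 1), f j, f (j + 1)} := by
  classical
  obtain ⟨hn4, hinj, hadj⟩ := hC
  obtain ⟨u, hu, hzuA⟩ := hzu
  obtain ⟨hu1, hu2⟩ := hu
  obtain ⟨huM, y, hyM, hyu⟩ := hu1
  obtain ⟨hz1, hz2, hz3⟩ := hz
  -- numeric facts in `ZMod n`
  have hnzn : ∀ m : ℕ, 0 < m → m < n → ((m : ℕ) : ZMod n) ≠ 0 := by
    intro m hm1 hm2 h
    rw [ZMod.natCast_eq_zero_iff] at h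
    have := Nat.le_of_dvd hm1 h
    omega
  have h1 : (1 : ZMod n) ≠ 0 := by
    have := hnzn 1 (by omega) (by omega); simpa using this
  have h2 : (2 : ZMod n) ≠ 0 := by
    have := hnzn 2 (by omega) (by omega); simpa using this
  have h3 : (3 : ZMod n) ≠ 0 := by
    have := hnzn 3 (by omega) (by omega); simpa using this
  have h4 : (4 : ZMod n) ≠ 0 := by
    have := hnzn 4 (by omega) (by omega); simpa using this
  -- basic adjacency facts
  have hAdjE : ∀ a b : ZMod n, b = a + 1 → G.Adj (f a) (f b) :=
    fun a b h => (hadj a b).2 (Or.inl h)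
  have hAdjE2 : ∀ a b : ZMod n, a = b + 1 → G.Adj (f a) (f b) :=
    fun a b h => (hadj a b).2 (Or.inr h)
  have hNA : ∀ a b : ZMod n, b ≠ a + 1 → a ≠ b + 1 → ¬ G.Adj (f a) (f b) := by
    intro a b hx hy h
    rcases (hadj a b).1 h with h' | h'
    · exact hx h'
    · exact hy h'
  have hyC : ∀ k : ZMod n, ¬ G.Adj (f k) y :=
    fun k hk => hyM.2 ⟨hyM.1, f k, ⟨k, rfl⟩, hk⟩
  have hyC2 : ∀ k : ZMod n, ¬ G.Adj y (f k) := fun k h => hyC k h.symm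
  have hzC : z ∉ Set.range f := hz1.1
  have huC : u ∉ Set.range f := by
    rintro ⟨k, rfl⟩
    exact hyC k hyu.symm
  have hzy : ¬ G.Adj z y := by
    intro h
    exact hz2 ⟨fun hzM => hzM.2 hz1, y, hyM, h.symm⟩
  have hyzN : ¬ G.Adj y z := fun h => hzy h.symm
  have nyz : y ≠ z := by
    intro h
    exact hyM.2 (by rw [h]; exact hz1)
  have nzy : z ≠ y := fun h => nyz h.symm
  have nfy : ∀ k : ZMod n, f k ≠ y := fun k h => hyM.1 ⟨k, h⟩
  have nyf : ∀ k : ZMod n, y ≠ f k := fun k h => hyM.1 ⟨k, h.symm⟩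
  have nfz : ∀ k : ZMod n, f k ≠ z := fun k h => hzC ⟨k, h⟩
  have nzf : ∀ k : ZMod n, z ≠ f k := fun k h => hzC ⟨k, h.symm⟩
  have nfu : ∀ k : ZMod n, f k ≠ u := fun k h => huC ⟨k, h⟩
  have nuf : ∀ k : ZMod n, u ≠ f k := fun k h => huC ⟨k, h.symm⟩
  have huz : G.Adj u z := hzuA.symm
  have huy : G.Adj u y := hyu.symm
  have hui : G.Adj u (f i) := by
    have hm : f i ∈ G.neighborSet u ∩ Set.range f := by
      rw [hu2]; exact Set.mem_insert _ _
    exact hm.1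
  have hui1 : G.Adj u (f (i + 1)) := by
    have hm : f (i + 1) ∈ G.neighborSet u ∩ Set.range f := by
      rw [hu2]; exact Set.mem_insert_of_mem _ rfl
    exact hm.1
  have huk : ∀ k : ZMod n, G.Adj u (f k) → k = i ∨ k = i + 1 := by
    intro k hk
    have hmem : f k ∈ G.neighborSet u ∩ Set.range f := ⟨hk, ⟨k, rfl⟩⟩
    rw [hu2] at hmem
    simp only [Set.mem_insert_iff, Set.mem_singleton_iff] at hmem
    rcases hmem with h | h
    · exact Or.inl (hinj h)
    · exact Or.inr (hinj h)
  have hnu : ∀ k : ZMod n, k ≠ i → k ≠ i + 1 → ¬ G.Adj u (f k) :=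
    fun k hk1 hk2 h => (huk k h).elim hk1 hk2
  -- the two main fork lemmas
  have hT4 : ∀ a b : ZMod n, G.Adj z (f a) → G.Adj z (f b) → a ≠ i → a ≠ i + 1 →
      b ≠ i → b ≠ i + 1 → a ≠ b → b = a + 1 ∨ a = b + 1 := by
    intro a b hza hzb hai hai1 hbi hbi1 hab
    by_contra hcon
    push_neg at hcon
    exact hfork (fork_of G z (f a) (f b) u y hza hzb hzuA huy
      (hNA a b hcon.1 hcon.2)
      (fun h => hnu a hai hai1 h.symm) (fun h => hnu b hbi hbi1 h.symm)
      hzy (hyC a) (hyC b)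
      (fun h => hab (hinj h)) (nfu a) (nfu b) nzy (nfy a) (nfy b))
  have hT5 : ∀ k : ZMod n, G.Adj z (f k) → ¬ G.Adj z (f (k - 1)) → ¬ G.Adj z (f (k + 1)) →
      k ≠ i → k ≠ i + 1 → k ≠ i - 1 → k ≠ i + 2 → False := by
    intro k hk hm hp h1k h2k h3k h4k
    exact hfork (fork_of G (f k) (f (k - 1)) (f (k + 1)) z u
      (hAdjE2 k (k - 1) (by ring))
      (hAdjE k (k + 1) (by ring))
      hk.symm hzuA
      (hNA (k - 1) (k + 1) (fun h => h1 (by linear_combination h))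
        (fun h => h3 (by linear_combination -h)))
      (fun h => hm h.symm) (fun h => hp h.symm)
      (fun h => hnu k h1k h2k h.symm)
      (fun h => hnu (k - 1) (fun hh => h2k (by linear_combination hh))
        (fun hh => h4k (by linear_combination hh)) h.symm)
      (fun h => hnu (k + 1) (fun hh => h3k (by linear_combination hh))
        (fun hh => h1k (by linear_combination hh)) h.symm)
      (fun h => by have hh := hinj h; exact h2 (by linear_combination -hh))
      (nfz (k - 1)) (nfz (k + 1)) (nfu k) (nfu (k - 1)) (nfu (k + 1)))
  -- Step A: z is adjacent to both f i and f (i+1)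
  have hAi1 : G.Adj z (f (i + 1)) := by
    by_contra h1A
    have hA2 : G.Adj z (f (i + 2)) := by
      by_contra hA2
      exact hfork (fork_of G u y z (f (i + 1)) (f (i + 2))
        huy huz hui1 (hAdjE (i + 1) (i + 2) (by ring))
        hyzN (hyC2 (i + 1)) h1A
        (hnu (i + 2) (fun h => h2 (by linear_combination h)) (fun h => h1 (by linear_combination h)))
        (hyC2 (i + 2)) hA2
        nyz (nyf (i + 1)) (nzf (i + 1)) (nuf (i + 2)) (nyf (i + 2)) (nzf (i + 2)))
    have hA3 : ¬ G.Adj z (f (i + 3)) := by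
      intro hA3
      exact hfork (fork_of G u (f (i + 1)) y z (f (i + 3))
        hui1 huy huz hA3
        (hyC (i + 1)) (fun h => h1A h.symm) hyzN
        (hnu (i + 3) (fun h => h3 (by linear_combination h)) (fun h => h2 (by linear_combination h)))
        (hNA (i + 1) (i + 3) (fun h => h1 (by linear_combination h))
          (fun h => h3 (by linear_combination -h)))
        (hyC2 (i + 3))
        (nfy (i + 1)) (nfz (i + 1)) nyz (nuf (i + 3))
        (fun h => by have hh := hinj h; exact h2 (by linear_combination -hh))
        (nyf (i + 3)))
    have hA4 : ¬ G.Adj z (f (i + 4)) := by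
      intro hA4
      rcases hT4 (i + 2) (i + 4) hA2 hA4
        (fun h => h2 (by linear_combination h)) (fun h => h1 (by linear_combination h))
        (fun h => h4 (by linear_combination h)) (fun h => h3 (by linear_combination h))
        (fun h => h2 (by linear_combination -h)) with h | h
      · exact h1 (by linear_combination h)
      · exact h3 (by linear_combination -h)
    exact hfork (fork_of G (f (i + 2)) (f (i + 1)) z (f (i + 3)) (f (i + 4))
      (hAdjE2 (i + 2) (i + 1) (by ring))
      hA2.symm
      (hAdjE (i + 2) (i + 3) (by ring))
      (hAdjE (i + 3) (i + 4) (by ring))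
      (fun h => h1A h.symm)
      (hNA (i + 1) (i + 3) (fun h => h1 (by linear_combination h))
        (fun h => h3 (by linear_combination -h)))
      hA3
      (hNA (i + 2) (i + 4) (fun h => h1 (by linear_combination h))
        (fun h => h3 (by linear_combination -h)))
      (hNA (i + 1) (i + 4) (fun h => h2 (by linear_combination h))
        (fun h => h4 (by linear_combination -h)))
      hA4
      (nfz (i + 1))
      (fun h => by have hh := hinj h; exact h2 (by linear_combination -hh))
      (nzf (i + 3))
      (fun h => by have hh := hinj h; exact h2 (by linear_combination -hh))
      (fun h => by have hh := hinj h; exact h3 (by linear_combination -hh))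
      (nzf (i + 4)))
  have hAi : G.Adj z (f i) := by
    by_contra h0A
    have hAm1 : G.Adj z (f (i - 1)) := by
      by_contra hAm1
      exact hfork (fork_of G u y z (f i) (f (i - 1))
        huy huz hui (hAdjE2 i (i - 1) (by ring))
        hyzN (hyC2 i) h0A
        (hnu (i - 1) (fun h => h1 (by linear_combination -h)) (fun h => h2 (by linear_combination -h)))
        (hyC2 (i - 1)) hAm1
        nyz (nyf i) (nzf i) (nuf (i - 1)) (nyf (i - 1)) (nzf (i - 1)))
    have hAm2 : ¬ G.Adj z (f (i - 2)) := by
      intro hAm2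
      exact hfork (fork_of G u (f i) y z (f (i - 2))
        hui huy huz hAm2
        (hyC i) (fun h => h0A h.symm) hyzN
        (hnu (i - 2) (fun h => h2 (by linear_combination -h)) (fun h => h3 (by linear_combination -h)))
        (hNA i (i - 2) (fun h => h3 (by linear_combination -h))
          (fun h => h1 (by linear_combination h)))
        (hyC2 (i - 2))
        (nfy i) (nfz i) nyz (nuf (i - 2))
        (fun h => by have hh := hinj h; exact h2 (by linear_combination hh))
        (nyf (i - 2)))
    have hAm3 : ¬ G.Adj z (f (i - 3)) := by
      intro hAm3
      rcases hT4 (i - 1) (i - 3) hAm1 hAm3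
        (fun h => h1 (by linear_combination -h)) (fun h => h2 (by linear_combination -h))
        (fun h => h3 (by linear_combination -h)) (fun h => h4 (by linear_combination -h))
        (fun h => h2 (by linear_combination h)) with h | h
      · exact h3 (by linear_combination -h)
      · exact h1 (by linear_combination h)
    exact hfork (fork_of G (f (i - 1)) (f i) z (f (i - 2)) (f (i - 3))
      (hAdjE (i - 1) i (by ring))
      hAm1.symm
      (hAdjE2 (i - 1) (i - 2) (by ring))
      (hAdjE2 (i - 2) (i - 3) (by ring))
      (fun h => h0A h.symm)
      (hNA i (i - 2) (fun h => h3 (by linear_combination -h))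
        (fun h => h1 (by linear_combination h)))
      hAm2
      (hNA (i - 1) (i - 3) (fun h => h3 (by linear_combination -h))
        (fun h => h1 (by linear_combination h)))
      (hNA i (i - 3) (fun h => h4 (by linear_combination -h))
        (fun h => h2 (by linear_combination h)))
      hAm3
      (nfz i)
      (fun h => by have hh := hinj h; exact h2 (by linear_combination hh))
      (nzf (i - 2))
      (fun h => by have hh := hinj h; exact h2 (by linear_combination hh))
      (fun h => by have hh := hinj h; exact h3 (by linear_combination hh))
      (nzf (i - 3)))
  -- extensionality helpers
  have hext4 : ∀ a b c d : ZMod n,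
      (∀ m : ZMod n, G.Adj z (f m) → m = a ∨ m = b ∨ m = c ∨ m = d) →
      G.Adj z (f a) → G.Adj z (f b) → G.Adj z (f c) → G.Adj z (f d) →
      G.neighborSet z ∩ Set.range f = {f a, f b, f c, f d} := by
    intro a b c d hall ha hb hc hd
    ext x
    simp only [Set.mem_inter_iff, SimpleGraph.mem_neighborSet, Set.mem_range,
      Set.mem_insert_iff, Set.mem_singleton_iff]
    constructor
    · rintro ⟨hx, m, rfl⟩
      rcases hall m hx with rfl | rfl | rfl | rfl
      · exact Or.inl rfl
      · exact Or.inr (Or.inl rfl)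
      · exact Or.inr (Or.inr (Or.inl rfl))
      · exact Or.inr (Or.inr (Or.inr rfl))
    · rintro (rfl | rfl | rfl | rfl)
      exacts [⟨ha, a, rfl⟩, ⟨hb, b, rfl⟩, ⟨hc, c, rfl⟩, ⟨hd, d, rfl⟩]
  -- Step B
  by_cases hB : ∀ m : ZMod n, G.Adj z (f m) → m = i ∨ m = i + 1
  · left
    ext x
    simp only [Set.mem_inter_iff, SimpleGraph.mem_neighborSet, Set.mem_range,
      Set.mem_insert_iff, Set.mem_singleton_iff]
    constructor
    · rintro ⟨hx, m, rfl⟩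
      rcases hB m hx with rfl | rfl
      · exact Or.inl rfl
      · exact Or.inr rfl
    · rintro (rfl | rfl)
      exacts [⟨hAi, i, rfl⟩, ⟨hAi1, i + 1, rfl⟩]
  · right
    push_neg at hB
    obtain ⟨k, hAk, hki, hki1⟩ := hB
    by_cases hk1 : G.Adj z (f (k + 1))
    · by_cases hcase : k + 1 = i
      · have hkm : k = i - 1 := by linear_combination hcase
        rw [hkm] at hAk
        by_cases hm2 : G.Adj z (f (i - 2))
        · refine ⟨i - 2, fun h => h2 (by linear_combination -h),
            hext4 i (i + 1) (i - 2) (i - 2 + 1) ?_ hAi hAi1 hm2 ?_⟩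
          · intro m hm
            rcases eq_or_ne m i with rfl | hmi
            · exact Or.inl rfl
            rcases eq_or_ne m (i + 1) with rfl | hmi1
            · exact Or.inr (Or.inl rfl)
            rcases eq_or_ne m (i - 2) with rfl | hmi2
            · exact Or.inr (Or.inr (Or.inl rfl))
            rcases eq_or_ne m (i - 2 + 1) with rfl | hmi21
            · exact Or.inr (Or.inr (Or.inr rfl))
            exfalso
            rcases hT4 (i - 1) m hAk hm
              (fun h => h1 (by linear_combination -h)) (fun h => h2 (by linear_combination -h))
              hmi hmi1 (fun h => hmi21 (by linear_combination -h)) with h | h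
            · exact hmi (by linear_combination h)
            · exact hmi2 (by linear_combination -h)
          · have e1 : i - 2 + 1 = i - 1 := by ring
            rw [e1]; exact hAk
        · refine ⟨i - 1, fun h => h1 (by linear_combination -h),
            hext4 i (i + 1) (i - 1) (i - 1 + 1) ?_ hAi hAi1 hAk ?_⟩
          · intro m hm
            rcases eq_or_ne m i with rfl | hmi
            · exact Or.inl rfl
            rcases eq_or_ne m (i + 1) with rfl | hmi1
            · exact Or.inr (Or.inl rfl)
            rcases eq_or_ne m (i - 1) with rfl | hmim1
            · exact Or.inr (Or.inr (Or.inl rfl))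
            rcases eq_or_ne m (i - 1 + 1) with rfl | hmi11
            · exact Or.inr (Or.inr (Or.inr rfl))
            exfalso
            rcases hT4 (i - 1) m hAk hm
              (fun h => h1 (by linear_combination -h)) (fun h => h2 (by linear_combination -h))
              hmi hmi1 (fun h => hmim1 h.symm) with h | h
            · exact hmi11 h
            · have hme : m = i - 2 := by linear_combination -h
              rw [hme] at hm
              exact hm2 hm
          · have e1 : i - 1 + 1 = i := by ring
            rw [e1]; exact hAi
      · have hk1i1 : k + 1 ≠ i + 1 := fun h => hki (by linear_combination h)
        refine ⟨k, hki, hext4 i (i + 1) k (k + 1) ?_ hAi hAi1 hAk hk1⟩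
        intro m hm
        rcases eq_or_ne m i with rfl | hmi
        · exact Or.inl rfl
        rcases eq_or_ne m (i + 1) with rfl | hmi1
        · exact Or.inr (Or.inl rfl)
        rcases eq_or_ne m k with rfl | hmk
        · exact Or.inr (Or.inr (Or.inl rfl))
        rcases eq_or_ne m (k + 1) with rfl | hmk1
        · exact Or.inr (Or.inr (Or.inr rfl))
        exfalso
        rcases hT4 k m hAk hm hki hki1 hmi hmi1 (fun h => hmk h.symm) with h | h
        · exact hmk1 h
        · rcases hT4 (k + 1) m hk1 hm hcase hk1i1 hmi hmi1
            (fun hh => h2 (by linear_combination hh - h)) with h' | h'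
          · exact h3 (by linear_combination -h' - h)
          · exact hmk (by linear_combination -h')
    · by_cases hk2 : G.Adj z (f (k - 1))
      · by_cases hcase : k - 1 = i + 1
        · have hkm : k = i + 2 := by linear_combination hcase
          rw [hkm] at hAk hk1
          refine ⟨i + 1, fun h => h1 (by linear_combination h),
            hext4 i (i + 1) (i + 1) (i + 1 + 1) ?_ hAi hAi1 hAi1 ?_⟩
          · intro m hm
            rcases eq_or_ne m i with rfl | hmi
            · exact Or.inl rfl
            rcases eq_or_ne m (i + 1) with rfl | hmi1
            · exact Or.inr (Or.inl rfl)
            rcases eq_or_ne m (i + 1 + 1) with rfl | hmi2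
            · exact Or.inr (Or.inr (Or.inr rfl))
            exfalso
            rcases hT4 (i + 2) m hAk hm
              (fun h => h2 (by linear_combination h)) (fun h => h1 (by linear_combination h))
              hmi hmi1 (fun h => hmi2 (by linear_combination -h)) with h | h
            · rw [h] at hm
              exact hk1 hm
            · exact hmi1 (by linear_combination -h)
          · have e1 : i + 1 + 1 = i + 2 := by ring
            rw [e1]; exact hAk
        · have hk1i : k - 1 ≠ i := fun h => hki1 (by linear_combination h)
          refine ⟨k - 1, hk1i, hext4 i (i + 1) (k - 1) (k - 1 + 1) ?_ hAi hAi1 hk2 ?_⟩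
          · intro m hm
            rcases eq_or_ne m i with rfl | hmi
            · exact Or.inl rfl
            rcases eq_or_ne m (i + 1) with rfl | hmi1
            · exact Or.inr (Or.inl rfl)
            rcases eq_or_ne m (k - 1) with rfl | hmk1
            · exact Or.inr (Or.inr (Or.inl rfl))
            rcases eq_or_ne m (k - 1 + 1) with rfl | hmk
            · exact Or.inr (Or.inr (Or.inr rfl))
            exfalso
            rcases hT4 k m hAk hm hki hki1 hmi hmi1
              (fun h => hmk (by linear_combination -h)) with h | h
            · rw [h] at hm
              exact hk1 hm
            · exact hmk1 (by linear_combination -h)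
          · have e1 : k - 1 + 1 = k := by ring
            rw [e1]; exact hAk
      · exfalso
        have hkim1 : k ≠ i - 1 := by
          intro h
          have e : k + 1 = i := by linear_combination h
          rw [e] at hk1
          exact hk1 hAi
        have hki2 : k ≠ i + 2 := by
          intro h
          have e : k - 1 = i + 1 := by linear_combination h
          rw [e] at hk2
          exact hk2 hAi1
        exact hT5 k hAk hk2 hk1 hki hki1 hkim1 hki2
end

section
/- Let G be a minimal nonperfectly divisible fork-free graph, v ∈ V(G), and C = v_1v_2…v_nv_1 an odd hole contained in G[M(v)] (n ≥ 5 odd, indices modulo n). Then for every z ∈ Z(C) there exists i ∈ {1, 2, …, n} such that z is adjacent to both v_i and v_{i+1}. -/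
/-!
Suppose `z` has a neighbour on the odd hole `C` but no two consecutive ones. As `n` is odd, `2`
generates `ℤ/n`, so the neighbours of `z` are not closed under `i ↦ i + 2` unless `z` is complete
to `C`. Hence some neighbour `v_i` of `z` has `v_{i+2}` as non-neighbour, and `v_{i-1}`, `v_{i+1}`
are non-neighbours as well. Then `v_i` with leaves `z`, `v_{i-1}`, `v_{i+1}` and the edge
`v_{i+1}v_{i+2}` is an induced fork.
-/

open SimpleGraph

theorem ZMod.forall_of_forall_imp_add_unit {n : ℕ} [NeZero n] {a : ZMod n} (ha : IsUnit a)
    {P : ZMod n → Prop} (hP : ∀ i, P i → P (i + a)) {i₀ : ZMod n} (h₀ : P i₀) (j : ZMod n) :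
    P j := by
  have hmul : ∀ k : ℕ, P (i₀ + k * a) := by
    intro k
    induction k with
    | zero => simpa using h₀
    | succ k ih => simpa [add_mul, add_assoc] using hP _ ih
  have := hmul ((j - i₀) * a⁻¹).val
  rwa [ZMod.natCast_zmod_val, mul_assoc, ZMod.inv_mul_of_unit _ ha, mul_one,
    add_sub_cancel] at this

theorem ZMod.isUnit_two_of_odd {n : ℕ} (hn : Odd n) : IsUnit (2 : ZMod n) := by
  exact_mod_cast (ZMod.isUnit_iff_coprime 2 n).mpr (Nat.coprime_two_left.mpr hn)

theorem hasInducedCopy_fork_of_adj_s15 {V : Type*} {G : SimpleGraph V} {a b c d z : V}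
    (hab : G.Adj a b) (hbc : G.Adj b c) (hcd : G.Adj c d)
    (hac : ¬ G.Adj a c) (had : ¬ G.Adj a d) (hbd : ¬ G.Adj b d)
    (hzb : G.Adj z b) (hza : ¬ G.Adj z a) (hzc : ¬ G.Adj z c) (hzd : ¬ G.Adj z d)
    (hz_ne : z ≠ a) : HasInducedCopy G fork := by
  have hca := mt G.adj_symm hac
  have hda := mt G.adj_symm had
  have hdb := mt G.adj_symm hbd
  have haz := mt G.adj_symm hza
  have hcz := mt G.adj_symm hzc
  have hdz := mt G.adj_symm hzd
  have hinj : Function.Injective ![b, z, a, c, d] := by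
    intro x y hxy
    fin_cases x <;> fin_cases y <;> simp at hxy ⊢ <;> subst_vars <;> simp_all
  refine ⟨⟨_, hinj⟩, fun x y => ?_⟩
  fin_cases x <;> fin_cases y <;>
    simp [fork, hab.symm, hbc.symm, hcd.symm, hzb.symm, *]

theorem IsHole.adj_add_one_s15 {V : Type*} {G : SimpleGraph V} {n : ℕ} {f : ZMod n → V}
    (hC : IsHole G n f) (i : ZMod n) : G.Adj (f i) (f (i + 1)) :=
  (hC.2.2 _ _).mpr (Or.inl rfl)

theorem IsHole.not_adj_add {V : Type*} {G : SimpleGraph V} {n : ℕ} {f : ZMod n → V}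
    (hC : IsHole G n f) {k : ℕ} (hk : 2 ≤ k) (hkn : k + 2 ≤ n) (i : ZMod n) :
    ¬ G.Adj (f i) (f (i + k)) := by
  rw [hC.2.2]
  rintro (h | h)
  · exact ZMod.natCast_ne_zero_of_lt (n := n) (k := k - 1) (by omega) (by omega)
      (by push_cast [Nat.cast_sub (by omega : 1 ≤ k)]; linear_combination h)
  · exact ZMod.natCast_ne_zero_of_lt (n := n) (k := k + 1) (by omega) (by omega)
      (by push_cast; linear_combination -h)

theorem IsHole.five_le_of_odd {V : Type*} {G : SimpleGraph V} {n : ℕ} {f : ZMod n → V}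
    (hC : IsHole G n f) (hodd : Odd n) : 5 ≤ n := by
  obtain ⟨k, rfl⟩ := hodd
  have := hC.1
  omega

theorem IsHole.hasInducedCopy_fork {V : Type*} {G : SimpleGraph V} {n : ℕ} {f : ZMod n → V}
    (hC : IsHole G n f) (hn : 5 ≤ n) {z : V} (hz : z ∉ Set.range f) (i : ZMod n)
    (hzi : G.Adj z (f i)) (hz₀ : ¬ G.Adj z (f (i - 1))) (hz₂ : ¬ G.Adj z (f (i + 1)))
    (hz₃ : ¬ G.Adj z (f (i + 2))) : HasInducedCopy G fork := by
  have h₀₁ := hC.adj_add_one_s15 (i - 1)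
  have h₂₃ := hC.adj_add_one_s15 (i + 1)
  have h₀₂ := hC.not_adj_add (k := 2) le_rfl (by omega) (i - 1)
  have h₀₃ := hC.not_adj_add (k := 3) (by norm_num) (by omega) (i - 1)
  have h₁₃ := hC.not_adj_add (k := 2) le_rfl (by omega) i
  rw [sub_add_cancel] at h₀₁
  rw [show i + 1 + 1 = i + 2 by ring] at h₂₃
  push_cast at h₀₂ h₀₃ h₁₃
  rw [show i - 1 + 2 = i + 1 by ring] at h₀₂
  rw [show i - 1 + 3 = i + 2 by ring] at h₀₃
  exact hasInducedCopy_fork_of_adj_s15 h₀₁ (hC.adj_add_one_s15 i) h₂₃ h₀₂ h₀₃ h₁₃ hzi hz₀ hz₂ hz₃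
    (fun h => hz ⟨_, h.symm⟩)

theorem stmt15_general {V : Type*} (G : SimpleGraph V)
    (hfork : ¬ HasInducedCopy G fork)
    (n : ℕ) (f : ZMod n → V) (hC : IsHole G n f) (hodd : Odd n) :
    ∀ z ∈ ZSet G n f, ∃ i : ZMod n, G.Adj z (f i) ∧ G.Adj z (f (i + 1)) := by
  rintro z ⟨⟨hzC, _, ⟨i₀, rfl⟩, hz₀⟩, -, hnot⟩
  by_contra! hcon
  have : NeZero n := ⟨hodd.pos.ne'⟩
  obtain ⟨i, hzi, hz₃⟩ : ∃ i, G.Adj z (f i) ∧ ¬ G.Adj z (f (i + 2)) := by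
    by_contra! h
    exact hnot (ZMod.forall_of_forall_imp_add_unit (ZMod.isUnit_two_of_odd hodd) h hz₀.symm)
  refine hfork (hC.hasInducedCopy_fork (hC.five_le_of_odd hodd) hzC i hzi ?_ (hcon i hzi) hz₃)
  exact fun h => hcon (i - 1) h (by rwa [sub_add_cancel])

theorem stmt15 {V : Type*} [Fintype V] (G : SimpleGraph V)
    (hfork : ¬ HasInducedCopy G fork) (hmin : MinimalNPD G)
    (v : V) (n : ℕ) (f : ZMod n → V) (hC : IsHole G n f) (hodd : Odd n)
    (hn : 5 ≤ n) (hMv : Set.range f ⊆ Mv G v) :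
    ∀ z ∈ ZSet G n f, ∃ i : ZMod n, G.Adj z (f i) ∧ G.Adj z (f (i + 1)) :=
  stmt15_general G hfork n f hC hodd
end

section
/- Let G be a minimal nonperfectly divisible fork-free graph, v ∈ V(G), and C = v_1v_2…v_nv_1 an odd hole contained in G[M(v)] (n ≥ 5 odd, indices modulo n). Then for every u ∈ U(C), the set N(u) ∩ M(C) is a clique. -/
open SimpleGraph

theorem stmt19 {V : Type*} [Fintype V] (G : SimpleGraph V)
    (hfork : ¬ HasInducedCopy G fork) (hmin : MinimalNPD G)
    (v : V) (n : ℕ) (f : ZMod n → V) (hC : IsHole G n f) (hodd : Odd n)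
    (hn : 5 ≤ n) (hMv : Set.range f ⊆ Mv G v) :
    ∀ u ∈ USet G n f, G.IsClique (G.neighborSet u ∩ MSet G (Set.range f)) := by
  intro u hu
  obtain ⟨huN, i, hNi⟩ := hu
  intro y hy y' hy' hne
  by_contra hyy'
  obtain ⟨hn4, hinj, hadjC⟩ := hC
  have h1 : i - 1 ≠ i := by
    intro h
    have h1' : ((1 : ℕ) : ZMod n) = 0 := by push_cast; linear_combination -h
    rw [ZMod.natCast_eq_zero_iff] at h1'
    exact absurd (Nat.le_of_dvd one_pos h1') (by omega)
  have h2 : i - 1 ≠ i + 1 := by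
    intro h
    have h2' : ((2 : ℕ) : ZMod n) = 0 := by push_cast; linear_combination -h
    rw [ZMod.natCast_eq_zero_iff] at h2'
    exact absurd (Nat.le_of_dvd two_pos h2') (by omega)
  -- basic facts about y and y'
  have hy1 : G.Adj u y := hy.1
  have hy'1 : G.Adj u y' := hy'.1
  have hyM : y ∈ MSet G (Set.range f) := hy.2
  have hy'M : y' ∈ MSet G (Set.range f) := hy'.2
  have hyC : ∀ j, ¬ G.Adj (f j) y := by
    intro j hadj
    exact hyM.2 ⟨hyM.1, f j, ⟨j, rfl⟩, hadj⟩
  have hy'C : ∀ j, ¬ G.Adj (f j) y' := by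
    intro j hadj
    exact hy'M.2 ⟨hy'M.1, f j, ⟨j, rfl⟩, hadj⟩
  have hyr : y ∉ Set.range f := hyM.1
  have hy'r : y' ∉ Set.range f := hy'M.1
  -- u is not on the hole
  have hur : u ∉ Set.range f := by
    intro hu_r
    obtain ⟨_, x, hxM, hxu⟩ := huN
    exact hxM.2 ⟨hxM.1, u, hu_r, hxu.symm⟩
  -- u is adjacent to f i but not to f (i-1)
  have hufi : G.Adj u (f i) := by
    have h : f i ∈ ({f i, f (i + 1)} : Set V) := Set.mem_insert _ _
    rw [← hNi] at h
    exact h.1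
  have hufi1 : ¬ G.Adj u (f (i - 1)) := by
    intro h
    have hmem : f (i - 1) ∈ ({f i, f (i + 1)} : Set V) := by
      rw [← hNi]; exact ⟨h, ⟨i - 1, rfl⟩⟩
    rcases hmem with hmem | hmem
    · exact h1 (hinj hmem)
    · exact h2 (hinj hmem)
  have hfif1 : G.Adj (f i) (f (i - 1)) := by
    rw [hadjC]
    exact Or.inr (by ring)
  -- distinctness facts
  have d01 : u ≠ y := hy1.ne
  have d02 : u ≠ y' := hy'1.ne
  have d03 : u ≠ f i := fun h => hur ⟨i, h.symm⟩
  have d04 : u ≠ f (i - 1) := fun h => hur ⟨i - 1, h.symm⟩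
  have d13 : y ≠ f i := fun h => hyr ⟨i, h.symm⟩
  have d14 : y ≠ f (i - 1) := fun h => hyr ⟨i - 1, h.symm⟩
  have d23 : y' ≠ f i := fun h => hy'r ⟨i, h.symm⟩
  have d24 : y' ≠ f (i - 1) := fun h => hy'r ⟨i - 1, h.symm⟩
  have d34 : f i ≠ f (i - 1) := fun h => h1 ((hinj h).symm)
  set g : Fin 5 → V := ![u, y, y', f i, f (i - 1)] with hg
  have ginj : Function.Injective g := by
    intro a b hab
    fin_cases a <;> fin_cases b <;>
      simp_all [g] <;>
      first
        | rfl
        | exact absurd hab.symm (by assumption)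
        | exact absurd hab (by assumption)
        | exact absurd hab hne
        | exact absurd hab.symm (Ne.symm hne)
  apply hfork
  refine ⟨⟨g, ginj⟩, ?_⟩
  intro a b
  fin_cases a <;> fin_cases b <;>
    simp [g, fork, SimpleGraph.fromEdgeSet_adj, Sym2.eq_iff] <;>
    first
      | exact hy1
      | exact hy'1
      | exact hufi
      | exact hfif1
      | exact hy1.symm
      | exact hy'1.symm
      | exact hufi.symm
      | exact hfif1.symm
      | assumption
      | (intro h; exact hyy' h)
      | (intro h; exact hyy' h.symm)
      | (intro h; exact hyC _ h.symm)
      | (intro h; exact hyC _ h)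
      | (intro h; exact hy'C _ h.symm)
      | (intro h; exact hy'C _ h)
      | (intro h; exact hufi1 h)
      | (intro h; exact hufi1 h.symm)
end
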